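/- arXiv:2206.09973 — 8 statements merged into one kernel-verified Lean document; each statement's English description precedes it below -/
import Mathlib

section
/- Let F be a finite field and C1, C2 ⊆ F^n linear codes. The pair (C1, C2) is ρ-product-expanding if and only if the product code C1 ⊗ C2 is ρ-agreement testable. -/
open Matrix Finset

namespace RTC

variable {F : Type*} [Field F] [Fintype F]

/-- All columns of the matrix `a` lie in the code `C`. -/
def colsIn {n1 n2 : ℕ} (C : Submodule F (Fin n1 → F)) (a : Matrix (Fin n1) (Fin n2) F) : Prop :=
  ∀ j : Fin n2, (fun i => a i j) ∈ C

/-- All rows of the matrix `a` lie in the code `C`. -/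
def rowsIn {n1 n2 : ℕ} (C : Submodule F (Fin n2 → F)) (a : Matrix (Fin n1) (Fin n2) F) : Prop :=
  ∀ i : Fin n1, (fun j => a i j) ∈ C

/-- Hamming weight of a matrix: the number of nonzero entries. -/
noncomputable def mwt {n1 n2 : ℕ} (x : Matrix (Fin n1) (Fin n2) F) : ℕ :=
  Nat.card {p : Fin n1 × Fin n2 // x p.1 p.2 ≠ 0}

/-- The number of nonzero columns of a matrix (`|x|_1`). -/
noncomputable def colWt {n1 n2 : ℕ} (x : Matrix (Fin n1) (Fin n2) F) : ℕ :=
  Nat.card {j : Fin n2 // (fun i => x i j) ≠ 0}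

/-- The number of nonzero rows of a matrix (`|x|_2`). -/
noncomputable def rowWt {n1 n2 : ℕ} (x : Matrix (Fin n1) (Fin n2) F) : ℕ :=
  Nat.card {i : Fin n1 // (fun j => x i j) ≠ 0}

/-- Hamming weight of a vector. -/
noncomputable def vwt {n : ℕ} (v : Fin n → F) : ℕ := Nat.card {i : Fin n // v i ≠ 0}

/-- Membership in `C1 ⊞ C2`: `c = a1 + a2` with all columns of `a1` in `C1`
and all rows of `a2` in `C2`. -/
def memBoxPlus {n1 n2 : ℕ} (C1 : Submodule F (Fin n1 → F)) (C2 : Submodule F (Fin n2 → F))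
    (c : Matrix (Fin n1) (Fin n2) F) : Prop :=
  ∃ a1 a2 : Matrix (Fin n1) (Fin n2) F, colsIn C1 a1 ∧ rowsIn C2 a2 ∧ c = a1 + a2

/-- The pair `(C1, C2)` is `ρ`-product-expanding: every `c ∈ C1 ⊞ C2` can be written as
`c = a1 + a2` (columns of `a1` in `C1`, rows of `a2` in `C2`) with
`ρ·(n1·|a1|_1 + n2·|a2|_2) ≤ |c|`. -/
def ProductExpanding {n1 n2 : ℕ} (ρ : ℝ) (C1 : Submodule F (Fin n1 → F))
    (C2 : Submodule F (Fin n2 → F)) : Prop :=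
  ∀ c : Matrix (Fin n1) (Fin n2) F, memBoxPlus C1 C2 c →
    ∃ a1 a2 : Matrix (Fin n1) (Fin n2) F, colsIn C1 a1 ∧ rowsIn C2 a2 ∧ c = a1 + a2 ∧
      ρ * ((n1 : ℝ) * (colWt a1 : ℝ) + (n2 : ℝ) * (rowWt a2 : ℝ)) ≤ (mwt c : ℝ)

/-- `C1 ⊗ F^{n2}` viewed as a submodule of matrices: all columns lie in `C`. -/
def colSp {n1 : ℕ} (n2 : ℕ) (C : Submodule F (Fin n1 → F)) :
    Submodule F (Matrix (Fin n1) (Fin n2) F) where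
  carrier := {a | ∀ j : Fin n2, (fun i => a i j) ∈ C}
  add_mem' := by
    intro a b ha hb j
    exact C.add_mem (ha j) (hb j)
  zero_mem' := by
    intro j
    exact C.zero_mem
  smul_mem' := by
    intro r a ha j
    exact C.smul_mem r (ha j)

/-- `F^{n1} ⊗ C` viewed as a submodule of matrices: all rows lie in `C`. -/
def rowSp (n1 : ℕ) {n2 : ℕ} (C : Submodule F (Fin n2 → F)) :
    Submodule F (Matrix (Fin n1) (Fin n2) F) where
  carrier := {a | ∀ i : Fin n1, (fun j => a i j) ∈ C}
  add_mem' := by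
    intro a b ha hb i
    exact C.add_mem (ha i) (hb i)
  zero_mem' := by
    intro i
    exact C.zero_mem
  smul_mem' := by
    intro r a ha i
    exact C.smul_mem r (ha i)

/-- The tensor product code `C1 ⊗ C2`: all columns in `C1` and all rows in `C2`. -/
def tens {n1 n2 : ℕ} (C1 : Submodule F (Fin n1 → F)) (C2 : Submodule F (Fin n2 → F)) :
    Submodule F (Matrix (Fin n1) (Fin n2) F) :=
  colSp n2 C1 ⊓ rowSp n1 C2

/-- The dual code `C^⊥`. -/
def dualCode {n : ℕ} (C : Submodule F (Fin n → F)) : Submodule F (Fin n → F) where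
  carrier := {y | ∀ c ∈ C, ∑ i, y i * c i = 0}
  add_mem' := by
    intro a b ha hb c hc
    have h2 : ∑ i, (a + b) i * c i = (∑ i, a i * c i) + ∑ i, b i * c i := by
      rw [← Finset.sum_add_distrib]; congr 1; funext i
      show (a i + b i) * c i = _; ring
    rw [h2, ha c hc, hb c hc, add_zero]
  zero_mem' := by
    intro c hc
    simp
  smul_mem' := by
    intro r a ha c hc
    have h2 : ∑ i, (r • a) i * c i = r * ∑ i, a i * c i := by
      rw [Finset.mul_sum]; congr 1; funext i
      show (r * a i) * c i = _; ring
    rw [h2, ha c hc, mul_zero]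

/-- Normalized distance `δ(x, S) = min_{s ∈ S} |x − s| / n²` of a matrix to a set of matrices. -/
noncomputable def ndelta {n : ℕ} (x : Matrix (Fin n) (Fin n) F)
    (S : Set (Matrix (Fin n) (Fin n) F)) : ℝ :=
  sInf ((fun s => (mwt (x - s) : ℝ) / ((n : ℝ) ^ 2)) '' S)

/-- The code `C1 ⊗ C2` is `ρ`-robustly testable. -/
def RobustlyTestable {n : ℕ} (ρ : ℝ) (C1 C2 : Submodule F (Fin n → F)) : Prop :=
  ∀ x : Matrix (Fin n) (Fin n) F,
    ρ * ndelta x (tens C1 C2 : Set (Matrix (Fin n) (Fin n) F)) ≤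
      (ndelta x (colSp n C1 : Set (Matrix (Fin n) (Fin n) F)) +
       ndelta x (rowSp n C2 : Set (Matrix (Fin n) (Fin n) F))) / 2

/-- The code `C1 ⊗ C2` is `ρ`-agreement testable. -/
def AgreementTestable {n : ℕ} (ρ : ℝ) (C1 C2 : Submodule F (Fin n → F)) : Prop :=
  ∀ c1 c2 : Matrix (Fin n) (Fin n) F, colsIn C1 c1 → rowsIn C2 c2 →
    ∃ c : Matrix (Fin n) (Fin n) F, colsIn C1 c ∧ rowsIn C2 c ∧
      ρ * ((colWt (c1 - c) : ℝ) + (rowWt (c2 - c) : ℝ)) ≤ (mwt (c1 - c2) : ℝ) / (n : ℝ)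

/-- The `q`-ary entropy function. -/
noncomputable def Hq (q : ℕ) (x : ℝ) : ℝ :=
  x * Real.logb q (q - 1) - x * Real.logb q x - (1 - x) * Real.logb q (1 - x)

/-- A subspace is `α`-sparse if it is spanned by vectors of Hamming weight at most `α·n`. -/
def Sparse {n : ℕ} (α : ℝ) (V : Submodule F (Fin n → F)) : Prop :=
  ∃ S : Set (Fin n → F), (∀ v ∈ S, (vwt v : ℝ) ≤ α * n) ∧ Submodule.span F S = V

/-- The Gaussian (`q`-ary) binomial coefficient, as a real number. -/
noncomputable def qBinom (q n k : ℕ) : ℝ :=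
  ∏ i ∈ Finset.range k, ((q : ℝ) ^ (n - i) - 1) / ((q : ℝ) ^ (k - i) - 1)

/-- Minimal Hamming distance from a vector to a code. -/
noncomputable def vdist {n : ℕ} (v : Fin n → F) (C : Submodule F (Fin n → F)) : ℕ :=
  sInf {d : ℕ | ∃ c ∈ C, vwt (v - c) = d}

/-- A codeword `x ∈ C1 ⊞ C2` is `Δ`-minimal. -/
def DeltaMinimal {n : ℕ} (C1 C2 : Submodule F (Fin n → F)) (Δ : ℝ)
    (x : Matrix (Fin n) (Fin n) F) : Prop :=
  (∀ i : Fin n, (vwt (fun j => x i j) : ℝ) ≤ (vdist (fun j => x i j) C2 : ℝ) + Δ) ∧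
  (∀ j : Fin n, (vwt (fun i => x i j) : ℝ) ≤ (vdist (fun i => x i j) C1 : ℝ) + Δ)

/-- Hamming weight of the submatrix of `x` with rows in `A` and columns in `B`. -/
noncomputable def subWt {n : ℕ} (x : Matrix (Fin n) (Fin n) F) (A B : Finset (Fin n)) : ℕ :=
  Nat.card {p : Fin n × Fin n // p.1 ∈ A ∧ p.2 ∈ B ∧ x p.1 p.2 ≠ 0}

/-- The pair `(C1, C2)` is `(s, m, β)`-product-expanding. -/
def SMBExpanding {n : ℕ} (s m β : ℝ) (C1 C2 : Submodule F (Fin n → F)) : Prop :=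
  ∀ x : Matrix (Fin n) (Fin n) F, memBoxPlus C1 C2 x → x ≠ 0 →
    DeltaMinimal C1 C2 (β * n) x →
    ∀ A B : Finset (Fin n), (n : ℝ) - m ≤ (A.card : ℝ) → (n : ℝ) - m ≤ (B.card : ℝ) →
      s ≤ (subWt x A B : ℝ)

/-- The function `c` restricted to every line parallel to axis `i` lies in `C i`
(membership in `C^{(i)}`). -/
def axisIn {ι : Type*} [DecidableEq ι] {n : ι → ℕ} (C : ∀ i, Submodule F (Fin (n i) → F))
    (i : ι) (a : (∀ j, Fin (n j)) → F) : Prop :=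
  ∀ y : ∀ j, Fin (n j), (fun s => a (Function.update y i s)) ∈ C i

/-- The number of grid points lying on a line parallel to axis `i` on which `a` is not
identically zero.  Since every such line contains exactly `n i` points, this equals
`n i · |a|_i` where `|a|_i` is the number of nonzero lines parallel to axis `i`. -/
noncomputable def lineCnt {ι : Type*} [DecidableEq ι] {n : ι → ℕ} (i : ι)
    (a : (∀ j, Fin (n j)) → F) : ℕ :=
  Nat.card {y : ∀ j, Fin (n j) // (fun s : Fin (n i) => a (Function.update y i s)) ≠ 0}

/-- Hamming weight of an element of `F^{n_1 × … × n_m}`. -/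
noncomputable def gwt {ι : Type*} {n : ι → ℕ} (a : (∀ j, Fin (n j)) → F) : ℕ :=
  Nat.card {y : ∀ j, Fin (n j) // a y ≠ 0}

/-- The collection `C` is `ρ`-product-expanding: every `c ∈ C_1 ⊞ … ⊞ C_m` can be written as
`c = Σ_i a_i` with `a_i ∈ C^{(i)}` and `ρ · Σ_i n_i·|a_i|_i ≤ |c|`
(note `lineCnt i (a i) = n_i · |a_i|_i`). -/
def MProdExpanding {ι : Type*} [Fintype ι] [DecidableEq ι] {n : ι → ℕ} (ρ : ℝ)
    (C : ∀ i, Submodule F (Fin (n i) → F)) : Prop :=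
  ∀ c : (∀ j, Fin (n j)) → F,
    (∃ a : ι → ((∀ j, Fin (n j)) → F), (∀ i, axisIn C i (a i)) ∧ c = ∑ i, a i) →
    ∃ a : ι → ((∀ j, Fin (n j)) → F), (∀ i, axisIn C i (a i)) ∧ c = ∑ i, a i ∧
      ρ * (∑ i, (lineCnt i (a i) : ℝ)) ≤ (gwt c : ℝ)

lemma colWt_neg' {n1 n2 : ℕ} (a : Matrix (Fin n1) (Fin n2) F) :
    colWt (-a) = colWt a := by
  apply Nat.card_congr
  apply Equiv.subtypeEquivRight
  intro j
  have : (fun i => (-a) i j) = -(fun i => a i j) := rfl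
  rw [this, ne_eq, neg_eq_zero, ne_eq]

lemma rowWt_neg' {n1 n2 : ℕ} (a : Matrix (Fin n1) (Fin n2) F) :
    rowWt (-a) = rowWt a := by
  apply Nat.card_congr
  apply Equiv.subtypeEquivRight
  intro i
  have : (fun j => (-a) i j) = -(fun j => a i j) := rfl
  rw [this, ne_eq, neg_eq_zero, ne_eq]

lemma colWt_zero' {n2 : ℕ} (a : Matrix (Fin 0) (Fin n2) F) : colWt a = 0 := by
  unfold colWt
  have : IsEmpty {j : Fin n2 // (fun i => a i j) ≠ 0} :=
    ⟨fun ⟨j, hj⟩ => hj (funext fun i => i.elim0)⟩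
  exact Nat.card_of_isEmpty

lemma rowWt_zero' {n1 : ℕ} (a : Matrix (Fin n1) (Fin 0) F) : rowWt a = 0 := by
  unfold rowWt
  have : IsEmpty {i : Fin n1 // (fun j => a i j) ≠ 0} :=
    ⟨fun ⟨i, hi⟩ => hi (funext fun j => j.elim0)⟩
  exact Nat.card_of_isEmpty

end RTC

/-- `(C1, C2)` is `ρ`-product-expanding iff `C1 ⊗ C2` is `ρ`-agreement
testable. -/
theorem statement2 (F : Type) [Field F] [Fintype F] {n : ℕ} (ρ : ℝ) (hρ : 0 < ρ)
    (C1 C2 : Submodule F (Fin n → F)) :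
    RTC.ProductExpanding ρ C1 C2 ↔ RTC.AgreementTestable ρ C1 C2 := by
  constructor
  · intro hPE c1 c2 hc1 hc2
    obtain ⟨a1, a2, ha1, ha2, heq, hle⟩ := hPE (c1 - c2)
      ⟨c1, -c2, hc1, fun i => C2.neg_mem (hc2 i), by abel⟩
    refine ⟨c1 - a1, fun j => C1.sub_mem (hc1 j) (ha1 j), ?_, ?_⟩
    · intro i
      have : c1 - a1 = c2 + a2 := by
        have : c1 - c2 = a1 + a2 := heq
        rw [sub_eq_iff_eq_add] at this ⊢
        rw [this]; abel
      rw [this]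
      exact C2.add_mem (hc2 i) (ha2 i)
    · have h1 : c1 - (c1 - a1) = a1 := by abel
      have h2 : c2 - (c1 - a1) = -a2 := by
        have : c1 - c2 = a1 + a2 := heq
        rw [sub_eq_iff_eq_add] at this
        rw [this]; abel
      rw [h1, h2, RTC.rowWt_neg']
      rcases Nat.eq_zero_or_pos n with hn | hn
      · subst hn
        simp [RTC.colWt_zero', RTC.rowWt_zero']
      · have hn' : (0 : ℝ) < n := by exact_mod_cast hn
        rw [le_div_iff₀ hn']
        nlinarith [hle]
  · intro hAT c ⟨b1, b2, hb1, hb2, hc⟩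
    obtain ⟨c', hc'1, hc'2, hle⟩ := hAT b1 (-b2) hb1 (fun i => C2.neg_mem (hb2 i))
    refine ⟨b1 - c', b2 + c', fun j => C1.sub_mem (hb1 j) (hc'1 j),
      fun i => C2.add_mem (hb2 i) (hc'2 i), by rw [hc]; abel, ?_⟩
    have h2 : -b2 - c' = -(b2 + c') := by abel
    rw [h2, RTC.rowWt_neg'] at hle
    have h3 : b1 - -b2 = c := by rw [hc]; abel
    rw [h3] at hle
    rcases Nat.eq_zero_or_pos n with hn | hn
    · subst hn
      simp only [RTC.colWt_zero', RTC.rowWt_zero']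
      have : (0:ℝ) ≤ (RTC.mwt c : ℝ) := Nat.cast_nonneg _
      push_cast
      nlinarith
    · have hn' : (0 : ℝ) < n := by exact_mod_cast hn
      rw [le_div_iff₀ hn'] at hle
      nlinarith [hle]
end

section
/- For every integer q ≥ 2 and all natural numbers k ≤ n, the Gaussian binomial coefficient satisfies q^{k(n−k)} ≤ [n choose k]_q ≤ 4·q^{k(n−k)}. -/
open Matrix Finset

lemma aux_prod_ge (Q : ℝ) (hQ : 2 ≤ Q) (k : ℕ) :
    (1:ℝ)/4 * (1 + 2 * (1/2:ℝ)^k) ≤ ∏ j ∈ range k, (1 - Q⁻¹ ^ (j+1)) := by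
  have hQ0 : (0:ℝ) < Q := by linarith
  have hinv : Q⁻¹ ≤ 1/2 := by
    rw [show (1:ℝ)/2 = (2:ℝ)⁻¹ by norm_num]
    exact inv_anti₀ (by norm_num) hQ
  have hinv0 : (0:ℝ) ≤ Q⁻¹ := by positivity
  have hpow : ∀ m : ℕ, Q⁻¹ ^ m ≤ (1/2:ℝ)^m := fun m => pow_le_pow_left₀ hinv0 hinv m
  induction k with
  | zero => norm_num
  | succ k ih =>
    rw [prod_range_succ]
    rcases Nat.eq_zero_or_pos k with hk | hk
    · subst hk
      simp only [prod_range_zero, one_mul]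
      have := hpow 1
      norm_num at this ⊢
      linarith
    · have hc2 : (1/2:ℝ)^k ≤ 1/2 := by
        calc (1/2:ℝ)^k ≤ (1/2:ℝ)^1 := pow_le_pow_of_le_one (by norm_num) (by norm_num) hk
        _ = 1/2 := by norm_num
      have hc0 : (0:ℝ) < (1/2:ℝ)^k := by positivity
      have h1 : Q⁻¹ ^ (k+1) ≤ (1/2:ℝ)^k * (1/2) := by
        have := hpow (k+1); rwa [pow_succ] at this
      have h0 : (0:ℝ) ≤ Q⁻¹ ^ (k+1) := by positivity
      have hP0 : (0:ℝ) < ∏ j ∈ range k, (1 - Q⁻¹ ^ (j+1)) := by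
        apply prod_pos
        intro j hj
        have := hpow (j+1)
        have : Q⁻¹ ^ (j+1) ≤ 1/2 := le_trans this (by
          calc ((1:ℝ)/2)^(j+1) ≤ (1/2:ℝ)^1 := pow_le_pow_of_le_one (by norm_num) (by norm_num) (by omega)
          _ = 1/2 := by norm_num)
        linarith
      rw [pow_succ]
      nlinarith [mul_le_mul_of_nonneg_left h1 (le_of_lt hP0),
        mul_le_mul_of_nonneg_right ih (by linarith : (0:ℝ) ≤ 1 - Q⁻¹^(k+1))]

noncomputable def RTCqBinomAux (q n k : ℕ) : ℝ :=
  ∏ i ∈ Finset.range k, ((q : ℝ) ^ (n - i) - 1) / ((q : ℝ) ^ (k - i) - 1)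

theorem statement3_aux (q n k : ℕ) (hq : 2 ≤ q) (hkn : k ≤ n) :
    (q : ℝ) ^ (k * (n - k)) ≤ RTCqBinomAux q n k ∧
      RTCqBinomAux q n k ≤ 4 * (q : ℝ) ^ (k * (n - k)) := by
  have hQ2 : (2:ℝ) ≤ (q:ℝ) := by exact_mod_cast hq
  set Q : ℝ := (q:ℝ) with hQdef
  have hQ0 : (0:ℝ) < Q := by linarith
  have hQ1 : (1:ℝ) < Q := by linarith
  have hb : ∀ i ∈ range k, (0:ℝ) < Q ^ (k - i) - 1 := by
    intro i hi
    have hik : i < k := mem_range.mp hi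
    have : (1:ℝ) < Q ^ (k - i) := one_lt_pow₀ hQ1 (by omega)
    linarith
  have hnum : ∀ i ∈ range k, (0:ℝ) ≤ Q ^ (n - i) - 1 := by
    intro i hi
    have : (1:ℝ) ≤ Q ^ (n - i) := one_le_pow₀ (le_of_lt hQ1)
    linarith
  have hmul : ∀ i ∈ range k, Q ^ (n - k) * Q ^ (k - i) = Q ^ (n - i) := by
    intro i hi
    have hik : i < k := mem_range.mp hi
    rw [← pow_add]
    congr 1
    omega
  constructor
  · have h : (Q ^ (n - k)) ^ k ≤ ∏ i ∈ range k, (Q ^ (n - i) - 1) / (Q ^ (k - i) - 1) := by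
      have := prod_const (b := Q ^ (n - k)) (s := range k)
      rw [card_range] at this
      rw [← this]
      apply prod_le_prod
      · intro i hi; positivity
      · intro i hi
        rw [le_div_iff₀ (hb i hi)]
        have h1 : (1:ℝ) ≤ Q ^ (n - k) := one_le_pow₀ (le_of_lt hQ1)
        nlinarith [hmul i hi]
    calc Q ^ (k * (n - k)) = (Q ^ (n - k)) ^ k := by rw [← pow_mul, Nat.mul_comm]
    _ ≤ _ := h
  · have key : ∀ i ∈ range k,
        (Q ^ (n - i) - 1) / (Q ^ (k - i) - 1) ≤ Q ^ (n - k) / (1 - Q⁻¹ ^ (k - i)) := by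
      intro i hi
      have hbi := hb i hi
      have ht0 : (0:ℝ) < Q ^ (k - i) := by positivity
      have hrw : Q ^ (n - k) / (1 - Q⁻¹ ^ (k - i)) = Q ^ (n - i) / (Q ^ (k - i) - 1) := by
        rw [inv_pow, ← hmul i hi]
        rw [eq_div_iff (ne_of_gt hbi)]
        field_simp
      rw [hrw]
      gcongr
      linarith
    have h2 : RTCqBinomAux q n k ≤ ∏ i ∈ range k, Q ^ (n - k) / (1 - Q⁻¹ ^ (k - i)) := by
      apply prod_le_prod
      · intro i hi
        exact div_nonneg (hnum i hi) (le_of_lt (hb i hi))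
      · exact key
    have hsplit : ∏ i ∈ range k, Q ^ (n - k) / (1 - Q⁻¹ ^ (k - i))
        = Q ^ (k * (n - k)) / ∏ i ∈ range k, (1 - Q⁻¹ ^ (k - i)) := by
      rw [prod_div_distrib, prod_const, card_range, ← pow_mul, Nat.mul_comm]
    have hPeq : ∏ i ∈ range k, (1 - Q⁻¹ ^ (k - i)) = ∏ j ∈ range k, (1 - Q⁻¹ ^ (j + 1)) := by
      rw [← prod_range_reflect (fun j => 1 - Q⁻¹ ^ (j + 1)) k]
      apply prod_congr rfl
      intro i hi
      have hik : i < k := mem_range.mp hi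
      congr 2
      omega
    have hP14 : (1:ℝ)/4 ≤ ∏ i ∈ range k, (1 - Q⁻¹ ^ (k - i)) := by
      rw [hPeq]
      refine le_trans ?_ (aux_prod_ge Q hQ2 k)
      have : (0:ℝ) ≤ (1/2:ℝ)^k := by positivity
      linarith
    calc RTCqBinomAux q n k ≤ Q ^ (k * (n - k)) / ∏ i ∈ range k, (1 - Q⁻¹ ^ (k - i)) := by
          rw [← hsplit]; exact h2
    _ ≤ Q ^ (k * (n - k)) / (1/4) := by
          gcongr
    _ = 4 * Q ^ (k * (n - k)) := by ring

/-- bounds on the Gaussian binomial coefficient: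
`q^{k(n−k)} ≤ [n choose k]_q ≤ 4·q^{k(n−k)}`. -/
theorem statement3 (q n k : ℕ) (hq : 2 ≤ q) (hkn : k ≤ n) :
    (q : ℝ) ^ (k * (n - k)) ≤ RTC.qBinom q n k ∧
      RTC.qBinom q n k ≤ 4 * (q : ℝ) ^ (k * (n - k)) := by
  exact statement3_aux q n k hq hkn
end

section
/- Let F be a finite field with q elements, n a natural number, and let V be a fixed v-dimensional subspace of F^n. Let k, u be natural numbers with k ≤ v, k ≤ u, and u ≤ n. Then the number of subspaces U ∈ Gr(n,u) with dim(U ∩ V) ≥ k is at most 4·q^{−k(n+k−v−u)}·|Gr(n,u)|, where q^{−k(n+k−v−u)} is an integer power of q (the exponent −k(n+k−v−u) may be negative or positive) and the inequality is between real numbers. -/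
open Matrix Finset

/-!
Every `U` with `dim (U ⊓ V) ≥ k` contains a `k`-dimensional `W ≤ V`, so there are at most as many
such `U` as flags `W ≤ U` with `W ≤ V`, that is `[v, k]_q · [n - k, u - k]_q`. Writing the Gaussian
binomials through the numbers `∏_{i<k} (q^m - q^i)` of linearly independent `k`-tuples in `F_q^m`,
the ratio of this count to `[n, u]_q` is bounded factor by factor by
`q^{-k(n+k-v-u)} / ∏_{j=1}^{k} (1 - q^{-j})`, and that last product is at least `1/4` as `q ≥ 2`.
-/

open Module Submodule

def linIndepCount (q m k : ℕ) : ℕ := ∏ i ∈ range k, (q ^ m - q ^ i)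

theorem linIndepCount_pos {q m k : ℕ} (hq : 1 < q) (hkm : k ≤ m) : 0 < linIndepCount q m k :=
  prod_pos fun _ hi => Nat.sub_pos_of_lt (Nat.pow_lt_pow_right hq ((mem_range.1 hi).trans_le hkm))

theorem linIndepCount_add (q : ℕ) {m k : ℕ} (hkm : k ≤ m) (j : ℕ) :
    linIndepCount q m (k + j) = linIndepCount q m k * q ^ (k * j) * linIndepCount q (m - k) j := by
  have hfactor (i : ℕ) : q ^ m - q ^ (k + i) = q ^ k * (q ^ (m - k) - q ^ i) := by
    rw [Nat.mul_sub, ← pow_add, ← pow_add, Nat.add_sub_cancel' hkm]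
  rw [linIndepCount, prod_range_add, mul_assoc]
  simp only [hfactor, prod_mul_distrib, prod_const, card_range, ← pow_mul, linIndepCount]

theorem linIndepCount_mul_linIndepCount_mul_pow_le {q v n : ℕ} (hq : 0 < q) (hvn : v ≤ n)
    (u k : ℕ) :
    linIndepCount q v k * linIndepCount q u k * q ^ (k * n) ≤
      q ^ (k * (v + u)) * linIndepCount q n k := by
  have term (i : ℕ) : (q ^ v - q ^ i) * (q ^ u - q ^ i) * q ^ n ≤ q ^ (v + u) * (q ^ n - q ^ i) := by
    have h : (q ^ v - q ^ i) * q ^ n ≤ q ^ v * (q ^ n - q ^ i) := by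
      rw [Nat.sub_mul, Nat.mul_sub, ← pow_add, ← pow_add, ← pow_add]
      exact Nat.sub_le_sub_left (Nat.pow_le_pow_right hq (by omega)) _
    calc (q ^ v - q ^ i) * (q ^ u - q ^ i) * q ^ n = (q ^ v - q ^ i) * q ^ n * (q ^ u - q ^ i) := by
          ring
      _ ≤ q ^ v * (q ^ n - q ^ i) * q ^ u := Nat.mul_le_mul h (Nat.sub_le _ _)
      _ = q ^ (v + u) * (q ^ n - q ^ i) := by ring
  calc linIndepCount q v k * linIndepCount q u k * q ^ (k * n)
      = ∏ i ∈ range k, (q ^ v - q ^ i) * (q ^ u - q ^ i) * q ^ n := by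
        rw [prod_mul_distrib, prod_mul_distrib, prod_const, card_range, mul_comm k, pow_mul]; rfl
    _ ≤ ∏ i ∈ range k, q ^ (v + u) * (q ^ n - q ^ i) := prod_le_prod' fun i _ => term i
    _ = q ^ (k * (v + u)) * linIndepCount q n k := by
        rw [prod_mul_distrib, prod_const, card_range, mul_comm k, pow_mul]; rfl

theorem one_quarter_le_prod_one_sub_pow {x : ℝ} (hx0 : 0 ≤ x) (hx : x ≤ 1 / 2) (k : ℕ) :
    1 / 4 ≤ ∏ j ∈ range k, (1 - x ^ (j + 1)) := by
  have h (k : ℕ) : 1 / 4 + x ^ (k + 2) ≤ ∏ j ∈ range (k + 1), (1 - x ^ (j + 1)) := by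
    induction k with
    | zero => rw [zero_add, prod_range_one, zero_add, pow_one]; nlinarith
    | succ k ih =>
      have hy : x ^ (k + 2) ≤ x ^ 2 := pow_le_pow_of_le_one hx0 (by linarith) (by omega)
      have hy0 : 0 ≤ x ^ (k + 2) := by positivity
      have hx2 : x ^ 2 ≤ 1 / 4 := by nlinarith
      rw [prod_range_succ, pow_succ x (k + 2)]
      nlinarith [mul_le_mul_of_nonneg_right ih (show 0 ≤ 1 - x ^ (k + 2) by linarith),
        mul_nonneg hy0 (show 0 ≤ 3 / 4 - x ^ (k + 2) - x by linarith)]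
  rcases k with _ | k
  · norm_num
  · linarith [h k, pow_nonneg hx0 (k + 2)]

theorem pow_le_four_mul_linIndepCount {q : ℕ} (hq : 2 ≤ q) (k : ℕ) :
    q ^ (k * k) ≤ 4 * linIndepCount q k k := by
  have hr : (0 : ℝ) < q := by positivity
  have hcast : (linIndepCount q k k : ℝ) =
      (q : ℝ) ^ (k * k) * ∏ j ∈ range k, (1 - (q : ℝ)⁻¹ ^ (j + 1)) := by
    have hpow : (q : ℝ) ^ (k * k) = ∏ _j ∈ range k, (q : ℝ) ^ k := by
      rw [prod_const, card_range, pow_mul]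
    rw [linIndepCount, Nat.cast_prod, ← prod_range_reflect (fun i => ((q ^ k - q ^ i : ℕ) : ℝ)),
      hpow, ← prod_mul_distrib]
    refine prod_congr rfl fun j hj => ?_
    rw [mem_range] at hj
    rw [Nat.cast_sub (Nat.pow_le_pow_right (by omega) (by omega)), Nat.cast_pow, Nat.cast_pow,
      show k - 1 - j = k - (j + 1) by omega, pow_sub₀ _ hr.ne' (by omega), inv_pow]
    ring
  have hx : (q : ℝ)⁻¹ ≤ 1 / 2 := by
    rw [one_div]; exact inv_anti₀ two_pos (by exact_mod_cast hq)
  have hprod := one_quarter_le_prod_one_sub_pow (by positivity) hx k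
  have hreal : (q : ℝ) ^ (k * k) ≤ 4 * linIndepCount q k k := by
    rw [hcast]; nlinarith [pow_pos hr (k * k)]
  exact_mod_cast hreal

theorem linIndepCount_mul_linIndepCount_sub_mul_pow_le {q n v k u : ℕ} (hq : 2 ≤ q)
    (hku : k ≤ u) (hun : u ≤ n) (hvn : v ≤ n) :
    linIndepCount q v k * linIndepCount q (n - k) (u - k) *
        (linIndepCount q u u * q ^ (k * (n + k))) ≤
      4 * q ^ (k * (v + u)) * linIndepCount q n u *
        (linIndepCount q k k * linIndepCount q (u - k) (u - k)) := by
  have hsplit (m : ℕ) (hm : k ≤ m) : linIndepCount q m u =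
      linIndepCount q m k * q ^ (k * (u - k)) * linIndepCount q (m - k) (u - k) := by
    rw [← linIndepCount_add q hm, Nat.add_sub_cancel' hku]
  rw [hsplit u hku, hsplit n (hku.trans hun), mul_add]
  calc _ = linIndepCount q v k * linIndepCount q u k * q ^ (k * n) *
        (linIndepCount q (n - k) (u - k) * q ^ (k * (u - k)) * linIndepCount q (u - k) (u - k) *
          q ^ (k * k)) := by ring
    _ ≤ q ^ (k * (v + u)) * linIndepCount q n k *
        (linIndepCount q (n - k) (u - k) * q ^ (k * (u - k)) * linIndepCount q (u - k) (u - k) *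
          (4 * linIndepCount q k k)) :=
      Nat.mul_le_mul (linIndepCount_mul_linIndepCount_mul_pow_le (by omega) hvn u k)
        (Nat.mul_le_mul_left _ (pow_le_four_mul_linIndepCount hq k))
    _ = _ := by ring

theorem card_le_finrank_eq_card_submodule {F M : Type*} [Field F] [AddCommGroup M] [Module F M]
    (V : Submodule F M) (k : ℕ) :
    Nat.card {W : Submodule F M // W ≤ V ∧ finrank F W = k} =
      Nat.card {W : Submodule F V // finrank F W = k} := by
  refine Nat.card_congr ((Equiv.subtypeSubtypeEquivSubtypeInter (· ≤ V) _).symm.trans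
    ((MapSubtype.orderIso V).toEquiv.subtypeEquiv fun W => ?_).symm)
  change _ ↔ finrank F (W.map V.subtype) = k
  rw [finrank_map_subtype_eq]

section FiniteDimensional

variable {F M : Type*} [Field F] [AddCommGroup M] [Module F M] [FiniteDimensional F M]

theorem exists_le_finrank_eq {X : Submodule F M} {k : ℕ} (hk : k ≤ finrank F X) :
    ∃ W ≤ X, finrank F W = k := by
  let s : Fin k → M := X.subtype ∘ Module.finBasis F X ∘ Fin.castLE hk
  have hs : LinearIndependent F s :=
    ((Module.finBasis F X).linearIndependent.comp _ (Fin.castLE_injective hk)).map' _ X.ker_subtype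
  refine ⟨span F (Set.range s), span_le.2 ?_, by rw [finrank_span_eq_card hs, Fintype.card_fin]⟩
  rintro _ ⟨i, rfl⟩
  exact Subtype.prop _

theorem finrank_map_mkQ_add_finrank {W X : Submodule F M} (h : W ≤ X) :
    finrank F (X.map W.mkQ) + finrank F W = finrank F X := by
  have := (W.mkQ.domRestrict X).finrank_range_add_finrank_ker
  rwa [LinearMap.range_domRestrict, LinearMap.ker_domRestrict, ker_mkQ,
    (comapSubtypeEquivOfLe h).finrank_eq] at this

theorem card_le_finrank_eq_card_quotient {W : Submodule F M} {u : ℕ} (hu : finrank F W ≤ u) :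
    Nat.card {U : Submodule F M // W ≤ U ∧ finrank F U = u} =
      Nat.card {U : Submodule F (M ⧸ W) // finrank F U = u - finrank F W} := by
  refine Nat.card_congr ((Equiv.subtypeSubtypeEquivSubtypeInter (W ≤ ·) _).symm.trans
    ((comapMkQRelIso W).toEquiv.subtypeEquiv fun X => ?_).symm)
  have := finrank_map_mkQ_add_finrank (le_comap_mkQ W X)
  rw [map_comap_eq_self (by rw [range_mkQ]; exact le_top)] at this
  change _ ↔ finrank F (comap W.mkQ X) = u
  omega

noncomputable def linearIndependentSpanEquiv {k : ℕ} (U : Submodule F M) (hU : finrank F U = k) :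
    {s : {s : Fin k → M // LinearIndependent F s} // span F (Set.range s.1) = U} ≃
      {t : Fin k → U // LinearIndependent F t} where
  toFun s := ⟨fun i => ⟨s.1.1 i, s.2.le (subset_span ⟨i, rfl⟩)⟩,
    LinearIndependent.of_comp U.subtype s.1.2⟩
  invFun t := ⟨⟨U.subtype ∘ t.1, t.2.map' _ U.ker_subtype⟩,
    eq_of_le_of_finrank_eq (span_le.2 (Set.range_subset_iff.2 fun i => (t.1 i).2))
      (by rw [finrank_span_eq_card (t.2.map' _ U.ker_subtype), Fintype.card_fin, hU])⟩
  left_inv _ := rfl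
  right_inv _ := rfl

end FiniteDimensional

section FiniteField

variable {F M : Type*} [Field F] [Fintype F] [AddCommGroup M] [Module F M] [Finite M]

theorem card_linearIndependent_eq_linIndepCount {k : ℕ} (hk : k ≤ finrank F M) :
    Nat.card {s : Fin k → M // LinearIndependent F s} =
      linIndepCount (Fintype.card F) (finrank F M) k := by
  rw [card_linearIndependent hk, linIndepCount, Fin.prod_univ_eq_prod_range (fun i => _ ^ _ - _ ^ i)]

theorem card_finrank_eq_mul_linIndepCount {k : ℕ} (hk : k ≤ finrank F M) :
    Nat.card {U : Submodule F M // finrank F U = k} * linIndepCount (Fintype.card F) k k =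
      linIndepCount (Fintype.card F) (finrank F M) k := by
  let spanOf (s : {s : Fin k → M // LinearIndependent F s}) :
      {U : Submodule F M // finrank F U = k} :=
    ⟨span F (Set.range s.1), by rw [finrank_span_eq_card s.2, Fintype.card_fin]⟩
  have card_fiber (U : {U : Submodule F M // finrank F U = k}) :
      Nat.card {s // spanOf s = U} = linIndepCount (Fintype.card F) k k := by
    rw [Nat.card_congr ((Equiv.subtypeEquivRight fun s => Subtype.ext_iff).trans
        (linearIndependentSpanEquiv U.1 U.2)),
      card_linearIndependent_eq_linIndepCount U.2.ge, U.2]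
  have := Fintype.ofFinite {U : Submodule F M // finrank F U = k}
  rw [← card_linearIndependent_eq_linIndepCount hk,
    ← Nat.card_congr (Equiv.sigmaFiberEquiv spanOf), Nat.card_sigma]
  simp only [card_fiber, sum_const, card_univ, smul_eq_mul, Nat.card_eq_fintype_card]

theorem card_finrank_inf_ge_mul_le (V : Submodule F M) {k u : ℕ} (hkv : k ≤ finrank F V)
    (hku : k ≤ u) (hu : u ≤ finrank F M) :
    Nat.card {U : Submodule F M // finrank F U = u ∧ k ≤ finrank F ↥(U ⊓ V)} *
        (linIndepCount (Fintype.card F) k k * linIndepCount (Fintype.card F) (u - k) (u - k)) ≤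
      linIndepCount (Fintype.card F) (finrank F V) k *
        linIndepCount (Fintype.card F) (finrank F M - k) (u - k) := by
  set q := Fintype.card F
  let Flags := Σ W : {W : Submodule F M // W ≤ V ∧ finrank F W = k},
    {U : Submodule F M // W.1 ≤ U ∧ finrank F U = u}
  have card_le : Nat.card {U : Submodule F M // finrank F U = u ∧ k ≤ finrank F ↥(U ⊓ V)} ≤
      Nat.card Flags := by
    refine Nat.card_le_card_of_surjective (fun p : Flags => ⟨p.2.1, p.2.2.2, ?_⟩) ?_
    · exact p.1.2.2.ge.trans (Submodule.finrank_mono (le_inf p.2.2.1 p.1.2.1))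
    · rintro ⟨U, hUu, hUk⟩
      obtain ⟨W, hW, hWk⟩ := exists_le_finrank_eq hUk
      exact ⟨⟨⟨W, hW.trans inf_le_right, hWk⟩, ⟨U, hW.trans inf_le_left, hUu⟩⟩, rfl⟩
  have card_fiber (W : {W : Submodule F M // W ≤ V ∧ finrank F W = k}) :
      Nat.card {U : Submodule F M // W.1 ≤ U ∧ finrank F U = u} * linIndepCount q (u - k) (u - k) =
        linIndepCount q (finrank F M - k) (u - k) := by
    have hquot : finrank F (M ⧸ W.1) = finrank F M - k := by
      have := W.1.finrank_quotient_add_finrank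
      omega
    have : Finite (M ⧸ W.1) := Module.finite_of_finite F
    rw [card_le_finrank_eq_card_quotient (W.2.2.le.trans hku), W.2.2, ← hquot,
      card_finrank_eq_mul_linIndepCount (by omega)]
  have card_flags : Nat.card Flags * linIndepCount q (u - k) (u - k) * linIndepCount q k k =
      linIndepCount q (finrank F V) k * linIndepCount q (finrank F M - k) (u - k) := by
    have := Fintype.ofFinite {W : Submodule F M // W ≤ V ∧ finrank F W = k}
    rw [Nat.card_sigma, sum_mul, sum_congr rfl fun W _ => card_fiber W, sum_const, card_univ,
      smul_eq_mul, ← Nat.card_eq_fintype_card, mul_right_comm,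
      card_le_finrank_eq_card_submodule, card_finrank_eq_mul_linIndepCount hkv]
  calc _ ≤ Nat.card Flags * (linIndepCount q k k * linIndepCount q (u - k) (u - k)) :=
        Nat.mul_le_mul_right _ card_le
    _ = _ := by rw [← card_flags]; ring

theorem card_finrank_inf_ge_mul_pow_le (V : Submodule F M) {k u : ℕ} (hkv : k ≤ finrank F V)
    (hku : k ≤ u) (hu : u ≤ finrank F M) :
    Nat.card {U : Submodule F M // finrank F U = u ∧ k ≤ finrank F ↥(U ⊓ V)} *
        Fintype.card F ^ (k * (finrank F M + k)) ≤
      4 * Fintype.card F ^ (k * (finrank F V + u)) *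
        Nat.card {U : Submodule F M // finrank F U = u} := by
  have hq : 2 ≤ Fintype.card F := Fintype.one_lt_card
  refine Nat.le_of_mul_le_mul_right ?_ (Nat.mul_pos
    (Nat.mul_pos (linIndepCount_pos hq (le_refl k)) (linIndepCount_pos hq (le_refl (u - k))))
    (linIndepCount_pos hq (le_refl u)))
  calc _ = Nat.card {U : Submodule F M // finrank F U = u ∧ k ≤ finrank F ↥(U ⊓ V)} *
          (linIndepCount _ k k * linIndepCount _ (u - k) (u - k)) *
          (linIndepCount _ u u * Fintype.card F ^ (k * (finrank F M + k))) := by ring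
    _ ≤ _ := Nat.mul_le_mul_right _ (card_finrank_inf_ge_mul_le V hkv hku hu)
    _ ≤ _ := (linIndepCount_mul_linIndepCount_sub_mul_pow_le hq hku hu V.finrank_le).trans_eq
        (by rw [← card_finrank_eq_mul_linIndepCount hu]; ring)

end FiniteField

/-- the number of `u`-dimensional subspaces `U` with `dim(U ∩ V) ≥ k` is at most
`4·q^{−k(n+k−v−u)}·|Gr(n,u)|`. -/
theorem statement4 (F : Type) [Field F] [Fintype F] (n v k u : ℕ)
    (V : Submodule F (Fin n → F)) (hV : Module.finrank F V = v)
    (hkv : k ≤ v) (hku : k ≤ u) (hun : u ≤ n) :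
    (Nat.card {U : Submodule F (Fin n → F) //
        Module.finrank F U = u ∧ k ≤ Module.finrank F ↥(U ⊓ V)} : ℝ) ≤
      4 * (Fintype.card F : ℝ) ^ (-((k : ℤ) * ((n : ℤ) + (k : ℤ) - (v : ℤ) - (u : ℤ)))) *
        (Nat.card {U : Submodule F (Fin n → F) // Module.finrank F U = u} : ℝ) := by
  have hn : finrank F (Fin n → F) = n := by simp
  have hcount := card_finrank_inf_ge_mul_pow_le V (hkv.trans_eq hV.symm) hku (hun.trans_eq hn.symm)
  rw [hV, hn] at hcount
  have hq : (0 : ℝ) < Fintype.card F := by exact_mod_cast Fintype.card_pos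
  rw [show -((k : ℤ) * ((n : ℤ) + (k : ℤ) - (v : ℤ) - (u : ℤ))) =
      ((k * (v + u) : ℕ) : ℤ) - ((k * (n + k) : ℕ) : ℤ) by push_cast; ring,
    zpow_sub₀ hq.ne', zpow_natCast, zpow_natCast, mul_div_assoc', div_mul_eq_mul_div,
    le_div_iff₀ (by positivity)]
  exact_mod_cast hcount
end

section
/- Let F be a finite field and C1, C2, X, Y ⊆ F^n linear subspaces. Then, as subspaces of the space of n×n matrices over F, (X ⊗ Y) ∩ (C1 ⊞ C2) = (X ∩ C1) ⊗ Y + X ⊗ (Y ∩ C2), where + denotes the sum of subspaces. -/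
open Matrix Finset

/-!
Choose a linear endomorphism `f` of `F^m` that vanishes on `C1`, maps `X` into `X`, and moves each
`x ∈ X` only by an element of `C1`: compose `F^m → F^m/C1` with a linear extension of a section
of the surjection `X → (X + C1)/C1`.
Let `P` be its matrix, acting on columns. For `M ∈ X ⊗ Y` with `M = a1 + a2`, columns of `a1` in
`C1` and rows of `a2` in `C2`, split `M = (M - P M) + P M`. The columns of `M - P M` lie in
`X ∩ C1`; left multiplication preserves every row condition, and `P M = P a2`, so the rows of
`P M` lie in `Y ∩ C2`.
-/

theorem Submodule.exists_le_ker_mapsTo_sub_mem {K V : Type*} [DivisionRing K] [AddCommGroup V]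
    [Module K V] (C X : Submodule K V) :
    ∃ f : V →ₗ[K] V, C ≤ LinearMap.ker f ∧ Set.MapsTo f X X ∧ ∀ x ∈ X, x - f x ∈ C := by
  set π := C.mkQ
  obtain ⟨s, hs⟩ := (π ∘ₗ X.subtype).rangeRestrict.exists_rightInverse_of_surjective
    (LinearMap.range_rangeRestrict _)
  obtain ⟨g, hg⟩ := LinearMap.exists_extend (X.subtype ∘ₗ s)
  have hgπ : ∀ x (hx : x ∈ X), g (π x) = s ⟨π x, ⟨x, hx⟩, rfl⟩ := fun x hx =>
    LinearMap.congr_fun hg ⟨π x, ⟨x, hx⟩, rfl⟩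
  refine ⟨g ∘ₗ π, fun c hc => ?_, fun x hx => ?_, fun x hx => ?_⟩
  · simp [π, (Submodule.Quotient.mk_eq_zero C).mpr hc]
  · simp only [LinearMap.comp_apply, hgπ x hx]
    exact SetLike.coe_mem _
  · have hsec : π (g (π x)) = π x := by
      rw [hgπ x hx]
      exact congrArg Subtype.val (LinearMap.congr_fun hs ⟨π x, ⟨x, hx⟩, rfl⟩)
    simpa using (Submodule.Quotient.eq C).mp hsec.symm

namespace RTC

variable {F : Type*} [Field F] {k m n : ℕ}

theorem colSp_inf (C D : Submodule F (Fin m → F)) :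
    colSp n (C ⊓ D) = colSp n C ⊓ colSp n D := by
  ext a
  exact forall_and

theorem rowSp_inf (C D : Submodule F (Fin n → F)) :
    rowSp m (C ⊓ D) = rowSp m C ⊓ rowSp m D := by
  ext a
  exact forall_and

theorem tens_inf_left (X C : Submodule F (Fin m → F)) (Y : Submodule F (Fin n → F)) :
    tens (X ⊓ C) Y = tens X Y ⊓ colSp n C := by
  rw [tens, tens, colSp_inf, inf_right_comm]

theorem tens_inf_right (X : Submodule F (Fin m → F)) (Y D : Submodule F (Fin n → F)) :
    tens X (Y ⊓ D) = tens X Y ⊓ rowSp m D := by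
  rw [tens, tens, rowSp_inf, inf_assoc]

theorem toMatrix'_mul_col (f : (Fin m → F) →ₗ[F] Fin m → F) (M : Matrix (Fin m) (Fin n) F)
    (j : Fin n) : (fun i => (LinearMap.toMatrix' f * M) i j) = f (fun i => M i j) := by
  rw [← LinearMap.toMatrix'_mulVec]
  rfl

theorem mul_mem_rowSp (P : Matrix (Fin k) (Fin m) F) {D : Submodule F (Fin n → F)}
    {M : Matrix (Fin m) (Fin n) F} (hM : M ∈ rowSp m D) : P * M ∈ rowSp k D := by
  intro i
  have hrow : (fun j => (P * M) i j) = ∑ l, P i l • (fun j => M l j) := by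
    ext j
    simp [Matrix.mul_apply]
  rw [hrow]
  exact D.sum_mem fun l _ => D.smul_mem _ (hM l)

theorem toMatrix'_mul_eq_zero {f : (Fin m → F) →ₗ[F] Fin m → F} {C : Submodule F (Fin m → F)}
    (hf : C ≤ LinearMap.ker f) {M : Matrix (Fin m) (Fin n) F} (hM : M ∈ colSp n C) :
    LinearMap.toMatrix' f * M = 0 := by
  ext i j
  exact congrFun ((toMatrix'_mul_col f M j).trans (hf (hM j))) i

theorem tens_inf_sup_le (X C1 : Submodule F (Fin m → F)) (Y C2 : Submodule F (Fin n → F)) :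
    tens X Y ⊓ (colSp n C1 ⊔ rowSp m C2) ≤ tens X Y ⊓ colSp n C1 ⊔ tens X Y ⊓ rowSp m C2 := by
  rintro M ⟨hMXY, hM⟩
  obtain ⟨a1, ha1, a2, ha2, rfl⟩ := Submodule.mem_sup.mp hM
  obtain ⟨f, hker, hX, hsub⟩ := Submodule.exists_le_ker_mapsTo_sub_mem C1 X
  set P := LinearMap.toMatrix' f
  have hPXY : P * (a1 + a2) ∈ tens X Y := by
    refine ⟨fun j => ?_, mul_mem_rowSp P hMXY.2⟩
    rw [toMatrix'_mul_col]
    exact hX (hMXY.1 j)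
  have hPC2 : P * (a1 + a2) ∈ rowSp m C2 := by
    rw [Matrix.mul_add, toMatrix'_mul_eq_zero hker ha1, zero_add]
    exact mul_mem_rowSp P ha2
  have hrestC1 : a1 + a2 - P * (a1 + a2) ∈ colSp n C1 := by
    intro j
    have := hsub _ (hMXY.1 j)
    rwa [← toMatrix'_mul_col] at this
  exact Submodule.mem_sup.mpr ⟨_, ⟨sub_mem hMXY hPXY, hrestC1⟩, _, ⟨hPXY, hPC2⟩, sub_add_cancel _ _⟩

end RTC

theorem statement7_general (F : Type) [Field F] {n : ℕ}
    (C1 C2 X Y : Submodule F (Fin n → F)) :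
    RTC.tens X Y ⊓ (RTC.colSp n C1 ⊔ RTC.rowSp n C2) =
      RTC.tens (X ⊓ C1) Y ⊔ RTC.tens X (Y ⊓ C2) := by
  rw [RTC.tens_inf_left, RTC.tens_inf_right]
  exact le_antisymm (RTC.tens_inf_sup_le X C1 Y C2) le_inf_sup

/-- `(X ⊗ Y) ∩ (C1 ⊞ C2) = (X ∩ C1) ⊗ Y + X ⊗ (Y ∩ C2)` as subspaces of the
space of `n×n` matrices, where `C1 ⊞ C2 = C1 ⊗ F^n + F^n ⊗ C2`. -/
theorem statement7 (F : Type) [Field F] [Fintype F] {n : ℕ}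
    (C1 C2 X Y : Submodule F (Fin n → F)) :
    RTC.tens X Y ⊓ (RTC.colSp n C1 ⊔ RTC.rowSp n C2) =
      RTC.tens (X ⊓ C1) Y ⊔ RTC.tens X (Y ⊓ C2) :=
  statement7_general F C1 C2 X Y
end

section
/- Let F be a finite field and A, B, C, D, E, G ⊆ F^n linear subspaces. Then, as subspaces of the space of n×n matrices over F, (A ⊗ B) ∩ (C ⊗ D + E ⊗ G) = (A ⊗ B) ∩ ((C ∩ (A + E)) ⊗ D + E ⊗ G), where + between subspaces of F^n or of F^{n×n} denotes the sum of subspaces. -/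
open Matrix Finset

/-- `(A ⊗ B) ∩ (C ⊗ D + E ⊗ G) = (A ⊗ B) ∩ ((C ∩ (A + E)) ⊗ D + E ⊗ G)`. -/
theorem statement8 (F : Type) [Field F] [Fintype F] {n : ℕ}
    (A B C D E G : Submodule F (Fin n → F)) :
    RTC.tens A B ⊓ (RTC.tens C D ⊔ RTC.tens E G) =
      RTC.tens A B ⊓ (RTC.tens (C ⊓ (A ⊔ E)) D ⊔ RTC.tens E G) := by
  apply le_antisymm
  · rintro x ⟨hx, hsup⟩
    refine ⟨hx, ?_⟩
    simp only [SetLike.mem_coe] at hsup ⊢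
    rw [Submodule.mem_sup] at hsup ⊢
    obtain ⟨c, hc, e, he, hce⟩ := hsup
    refine ⟨c, ⟨fun j => ⟨hc.1 j, ?_⟩, hc.2⟩, e, he, hce⟩
    rw [SetLike.mem_coe, Submodule.mem_sup]
    refine ⟨fun i => x i j, hx.1 j, fun i => -(e i j), neg_mem (he.1 j), ?_⟩
    funext i
    have : x i j = c i j + e i j := by rw [← hce]; rfl
    simp [this]
  · exact inf_le_inf le_rfl (sup_le_sup_right
      (fun y hy => ⟨fun j => (hy.1 j).1, hy.2⟩) _)
end

section
/- Let F be a finite field, C1, C2 ⊆ F^n linear codes, and d1, d2 positive integers such that every nonzero codeword of Ci has Hamming weight at least di (i = 1, 2). Let x ∈ C1 ⊞ C2 and let A1, A2 ⊆ {1,…,n} satisfy n − |A1| < d1 and n − |A2| < d2, and suppose x(i,j) = 0 for all (i,j) ∈ A1 × A2. Then x = a1 + a2 where every column of a1 lies in C1 and a1 has at most n − |A2| nonzero columns, and every row of a2 lies in C2 and a2 has at most n − |A1| nonzero rows. -/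
open Matrix Finset

section Aux

lemma natcard_subtype_le {n : ℕ} (P : Fin n → Prop) (A : Finset (Fin n))
    (h : ∀ i ∈ A, ¬ P i) : Nat.card {i // P i} ≤ n - A.card := by
  classical
  have h1 : Nat.card {i // P i} = (Finset.univ.filter P).card := by
    rw [Nat.card_eq_fintype_card, Fintype.card_subtype]
  rw [h1]
  have h2 : Finset.univ.filter P ⊆ Aᶜ := by
    intro i hi
    rw [Finset.mem_compl]
    rw [Finset.mem_filter] at hi
    exact fun hiA => h i hiA hi.2
  calc (Finset.univ.filter P).card ≤ Aᶜ.card := Finset.card_le_card h2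
    _ = n - A.card := by rw [Finset.card_compl, Fintype.card_fin]

lemma code_zero_of_vanish {F : Type*} [Field F] [Fintype F] {n : ℕ}
    (C : Submodule F (Fin n → F)) (d : ℕ)
    (hC : ∀ c ∈ C, c ≠ 0 → d ≤ RTC.vwt c)
    (A : Finset (Fin n)) (hA : n - A.card < d) (c : Fin n → F) (hc : c ∈ C)
    (hz : ∀ i ∈ A, c i = 0) : c = 0 := by
  by_contra h
  have h1 := hC c hc h
  have h2 : RTC.vwt c ≤ n - A.card := by
    unfold RTC.vwt
    exact natcard_subtype_le _ A (fun i hi => by simp [hz i hi])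
  omega

end Aux

/-- zero rectangles: if `x ∈ C1 ⊞ C2` vanishes on `A1 × A2` with
`n − |A_i| < d_i ≤ d(C_i)`, then `x` is a sum of at most `n − |A2|` columns from `C1`
and at most `n − |A1|` rows from `C2`. -/
theorem statement9 (F : Type) [Field F] [Fintype F] {n : ℕ}
    (C1 C2 : Submodule F (Fin n → F)) (d1 d2 : ℕ) (hd1 : 0 < d1) (hd2 : 0 < d2)
    (hC1 : ∀ c ∈ C1, c ≠ 0 → d1 ≤ RTC.vwt c) (hC2 : ∀ c ∈ C2, c ≠ 0 → d2 ≤ RTC.vwt c)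
    (x : Matrix (Fin n) (Fin n) F) (hx : RTC.memBoxPlus C1 C2 x)
    (A1 A2 : Finset (Fin n)) (hA1 : n - A1.card < d1) (hA2 : n - A2.card < d2)
    (hzero : ∀ i ∈ A1, ∀ j ∈ A2, x i j = 0) :
    ∃ a1 a2 : Matrix (Fin n) (Fin n) F, RTC.colsIn C1 a1 ∧ RTC.rowsIn C2 a2 ∧
      x = a1 + a2 ∧ RTC.colWt a1 ≤ n - A2.card ∧ RTC.rowWt a2 ≤ n - A1.card := by
    classical
  obtain ⟨b1, b2, hb1, hb2, hxeq⟩ := hx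
  -- restriction to A1, as a linear map on C1
  let π : (Fin n → F) →ₗ[F] (↥A1 → F) :=
    { toFun := fun v k => v k.val
      map_add' := fun a b => rfl
      map_smul' := fun r a => rfl }
  let f : ↥C1 →ₗ[F] (↥A1 → F) := π.comp C1.subtype
  have hfinj : LinearMap.ker f = ⊥ := by
    rw [LinearMap.ker_eq_bot']
    intro c hc
    have hcz : (c : Fin n → F) = 0 := by
      refine code_zero_of_vanish C1 d1 hC1 A1 hA1 _ c.2 (fun i hi => ?_)
      have := congrFun hc ⟨i, hi⟩
      exact this
    exact Subtype.ext hcz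
  obtain ⟨g, hg⟩ := f.exists_leftInverse_of_injective hfinj
  have hgf : ∀ c : ↥C1, g (f c) = c := fun c => by
    have := congrFun (congrArg DFunLike.coe hg) c
    simpa using this
  -- the correction matrix t
  set t : Matrix (Fin n) (Fin n) F :=
    fun i j => ((g (fun k : ↥A1 => - b2 k.val j)) : Fin n → F) i with ht
  have ht_col : ∀ j, (fun i => t i j) ∈ C1 := fun j => (g _).2
  -- t agrees with b1 on columns in A2
  have htA2 : ∀ j ∈ A2, ∀ i, t i j = b1 i j := by
    intro j hj i
    have hv : (fun k : ↥A1 => - b2 k.val j) = f ⟨fun i => b1 i j, hb1 j⟩ := by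
      funext k
      have hx0 : b1 k.val j + b2 k.val j = 0 := by
        have := hzero k.val k.2 j hj
        rw [hxeq] at this
        exact this
      show - b2 k.val j = b1 k.val j
      linear_combination -hx0
    have : t i j = ((g (f ⟨fun i => b1 i j, hb1 j⟩)) : Fin n → F) i := by
      show ((g (fun k : ↥A1 => - b2 k.val j)) : Fin n → F) i = _
      rw [hv]
    rw [this, hgf]
  -- rows of t lie in C2
  have ht_row : ∀ i, (fun j => t i j) ∈ C2 := by
    intro i
    have hrw : (fun j => t i j) =
        ∑ k : ↥A1, (-(((g (fun l : ↥A1 => if k = l then (1:F) else 0)) : Fin n → F) i))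
          • (fun j => b2 k.val j) := by
      funext j
      have hv : (fun k : ↥A1 => - b2 k.val j) =
          ∑ k : ↥A1, (- b2 k.val j) • (fun l : ↥A1 => if k = l then (1:F) else 0) :=
        pi_eq_sum_univ _
      have : t i j = ((g (∑ k : ↥A1, (- b2 k.val j) •
          (fun l : ↥A1 => if k = l then (1:F) else 0))) : Fin n → F) i := by
        show ((g (fun k : ↥A1 => - b2 k.val j)) : Fin n → F) i = _
        rw [hv]
      rw [this, map_sum]
      simp only [_root_.map_smul]
      rw [AddSubmonoidClass.coe_finset_sum, Finset.sum_apply, Finset.sum_apply]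
      refine Finset.sum_congr rfl (fun k _ => ?_)
      simp only [SetLike.val_smul, Pi.smul_apply, smul_eq_mul]
      ring
    rw [hrw]
    exact Submodule.sum_mem _ (fun k _ => Submodule.smul_mem _ _ (hb2 k.val))
  -- rows of b2 + t vanish on A1
  have hrowzero : ∀ i ∈ A1, ∀ j, b2 i j + t i j = 0 := by
    intro i hi
    have hw : (fun j => b2 i j + t i j) ∈ C2 := C2.add_mem (hb2 i) (ht_row i)
    have hwz : ∀ j ∈ A2, b2 i j + t i j = 0 := by
      intro j hj
      rw [htA2 j hj i]
      have h0 := hzero i hi j hj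
      rw [hxeq] at h0
      simp only [Matrix.add_apply] at h0
      show b2 i j + b1 i j = 0
      linear_combination h0
    have := code_zero_of_vanish C2 d2 hC2 A2 hA2 _ hw hwz
    intro j
    exact congrFun this j
  refine ⟨b1 - t, b2 + t, ?_, ?_, ?_, ?_, ?_⟩
  · intro j
    exact C1.sub_mem (hb1 j) (ht_col j)
  · intro i
    exact C2.add_mem (hb2 i) (ht_row i)
  · rw [hxeq]
    funext i j
    simp only [Matrix.add_apply, Matrix.sub_apply]
    ring
  · unfold RTC.colWt
    refine natcard_subtype_le _ A2 (fun j hj => ?_)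
    rw [not_ne_iff]
    funext i
    show (b1 - t) i j = 0
    simp [Matrix.sub_apply, htA2 j hj i]
  · unfold RTC.rowWt
    refine natcard_subtype_le _ A1 (fun i hi => ?_)
    rw [not_ne_iff]
    funext j
    show (b2 + t) i j = 0
    simp [Matrix.add_apply, hrowzero i hi j]
end

section
/- Let F be a finite field, C1, C2 ⊆ F^n linear codes, and x ∈ C1 ⊞ C2. Let X ⊆ F^n be the span of the columns of x and Y ⊆ F^n the span of the rows of x. Then rank(x) ≤ dim(X ∩ C1) + dim(Y ∩ C2). -/
open Matrix Finset

/-! The functionals vanishing on `C1` are sent by `f ↦ (f (x.col j))ⱼ` into the row space `Y`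
of `x`, and, since they kill the columns of `a1`, into the row space of `a2`, which lies in `C2`.
On this space of functionals the kernel of the map is the annihilator of `C1 + X`, so its image
in `Y ⊓ C2` has dimension `dim (C1 + X) - dim C1 = dim X - dim (X ⊓ C1) = rank x - dim (X ⊓ C1)`. -/

open Module

theorem Submodule.finrank_map_add_finrank_inf_ker {K V W : Type*} [Field K] [AddCommGroup V]
    [Module K V] [AddCommGroup W] [Module K W] [FiniteDimensional K V] (f : V →ₗ[K] W)
    (p : Submodule K V) :
    finrank K (p.map f) + finrank K ↥(p ⊓ LinearMap.ker f) = finrank K p := by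
  rw [← LinearMap.range_domRestrict, ← (f.domRestrict p).finrank_range_add_finrank_ker,
    LinearMap.ker_domRestrict, ← Submodule.finrank_map_subtype_eq, Submodule.map_comap_subtype]

namespace Matrix

variable {K : Type*} [Field K] {m n : Type*} [Fintype m] [DecidableEq m]

noncomputable def colEval (x : Matrix m n K) : Dual K (m → K) →ₗ[K] n → K :=
  x.vecMulLinear ∘ₗ (dotProductEquiv K m).symm.toLinearMap

theorem colEval_apply (x : Matrix m n K) (f : Dual K (m → K)) (j : n) :
    x.colEval f j = f (x.col j) := by
  show (dotProductEquiv K m).symm f ⬝ᵥ x.col j = f (x.col j)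
  rw [← dotProductEquiv_apply_apply, LinearEquiv.apply_symm_apply]

theorem range_colEval (x : Matrix m n K) :
    LinearMap.range x.colEval = Submodule.span K (Set.range x.row) := by
  rw [colEval, LinearMap.range_comp_of_range_eq_top _ (LinearEquiv.range _), range_vecMulLinear]

theorem ker_colEval (x : Matrix m n K) :
    LinearMap.ker x.colEval = (Submodule.span K (Set.range x.col)).dualAnnihilator := by
  ext f
  rw [LinearMap.mem_ker, Submodule.mem_dualAnnihilator, funext_iff]
  show _ ↔ Submodule.span K (Set.range x.col) ≤ LinearMap.ker f
  simp only [Submodule.span_le, Set.range_subset_iff, colEval_apply, Pi.zero_apply]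
  rfl

end Matrix

namespace RTC

variable {K : Type*} [Field K] {n1 n2 : ℕ} {C1 : Submodule K (Fin n1 → K)}
  {C2 : Submodule K (Fin n2 → K)} {x : Matrix (Fin n1) (Fin n2) K}

theorem map_dualAnnihilator_colEval_le (hx : memBoxPlus C1 C2 x) :
    C1.dualAnnihilator.map x.colEval ≤ Submodule.span K (Set.range x.row) ⊓ C2 := by
  rintro _ ⟨f, hf, rfl⟩
  refine ⟨range_colEval x ▸ LinearMap.mem_range_self _ f, ?_⟩
  obtain ⟨a1, a2, ha1, ha2, rfl⟩ := hx
  have hcol : (a1 + a2).colEval f = a2.colEval f := by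
    ext j
    rw [colEval_apply, colEval_apply, show (a1 + a2).col j = a1.col j + a2.col j from rfl, map_add,
      (Submodule.mem_dualAnnihilator f).mp hf (a1.col j) (ha1 j), zero_add]
  rw [hcol]
  refine (Submodule.span_le.mpr ?_) (range_colEval a2 ▸ LinearMap.mem_range_self _ f)
  rintro _ ⟨i, rfl⟩
  exact ha2 i

theorem finrank_span_col_le_of_memBoxPlus (hx : memBoxPlus C1 C2 x) :
    finrank K (Submodule.span K (Set.range x.col)) ≤
      finrank K ↥(Submodule.span K (Set.range x.col) ⊓ C1) +
      finrank K ↥(Submodule.span K (Set.range x.row) ⊓ C2) := by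
  set X := Submodule.span K (Set.range x.col)
  have hker : C1.dualAnnihilator ⊓ LinearMap.ker x.colEval = (C1 ⊔ X).dualAnnihilator := by
    rw [ker_colEval, Submodule.dualAnnihilator_sup_eq]
  have hnullity := Submodule.finrank_map_add_finrank_inf_ker x.colEval C1.dualAnnihilator
  rw [hker] at hnullity
  have hC1 := Subspace.finrank_add_finrank_dualAnnihilator_eq C1
  have hC1X := Subspace.finrank_add_finrank_dualAnnihilator_eq (C1 ⊔ X)
  have hsup := Submodule.finrank_sup_add_finrank_inf_eq C1 X
  have hmap := Submodule.finrank_mono (map_dualAnnihilator_colEval_le hx)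
  rw [inf_comm] at hsup
  omega

end RTC

theorem statement10_general (F : Type) [Field F] {n : ℕ}
    (C1 C2 : Submodule F (Fin n → F))
    (x : Matrix (Fin n) (Fin n) F) (hx : RTC.memBoxPlus C1 C2 x) :
    x.rank ≤
      Module.finrank F ↥(Submodule.span F (Set.range fun j : Fin n => fun i => x i j) ⊓ C1) +
      Module.finrank F ↥(Submodule.span F (Set.range fun i : Fin n => fun j => x i j) ⊓ C2) := by
  rw [Matrix.rank_eq_finrank_span_cols]
  exact RTC.finrank_span_col_le_of_memBoxPlus hx

/-- for `x ∈ C1 ⊞ C2`, with `X` the span of the columns of `x` and `Y` the span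
of its rows, `rank(x) ≤ dim(X ∩ C1) + dim(Y ∩ C2)`. -/
theorem statement10 (F : Type) [Field F] [Fintype F] {n : ℕ}
    (C1 C2 : Submodule F (Fin n → F))
    (x : Matrix (Fin n) (Fin n) F) (hx : RTC.memBoxPlus C1 C2 x) :
    x.rank ≤
      Module.finrank F ↥(Submodule.span F (Set.range fun j : Fin n => fun i => x i j) ⊓ C1) +
      Module.finrank F ↥(Submodule.span F (Set.range fun i : Fin n => fun j => x i j) ⊓ C2) :=
  statement10_general F C1 C2 x hx
end

section
/- Let F be a finite field, C1, C2 ⊆ F^n linear codes, x ∈ C1 ⊞ C2, and A1, A2 ⊆ {1,…,n}. Then there exists x' ∈ C1 ⊞ C2 such that x'(i,j) = x(i,j) for all (i,j) ∈ A1 × A2 and rank(x') equals the rank of the submatrix of x with rows indexed by A1 and columns indexed by A2. -/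
open Matrix Finset

/-- A linear section of coordinate restriction that preserves a given code. -/
lemma exists_code_section {F : Type} [Field F] {n : ℕ} (A : Finset (Fin n))
    (C : Submodule F (Fin n → F)) :
    ∃ s : ({i // i ∈ A} → F) →ₗ[F] (Fin n → F),
      (∀ w : {i // i ∈ A} → F, ∀ k : {i // i ∈ A}, s w (k : Fin n) = w k) ∧
      (∀ c ∈ C, s (fun k => c (k : Fin n)) ∈ C) := by
  classical
  set π : (Fin n → F) →ₗ[F] ({i // i ∈ A} → F) :=
    LinearMap.funLeft F F (fun k : {i // i ∈ A} => (k : Fin n)) with hπdef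
  have hπsurj : Function.Surjective π :=
    LinearMap.funLeft_surjective_of_injective F F _ Subtype.val_injective
  set f : C →ₗ[F] ({i // i ∈ A} → F) := π.comp C.subtype with hf
  obtain ⟨W1, hcompl⟩ := Submodule.exists_isCompl (LinearMap.range f)
  obtain ⟨g, hg⟩ := f.rangeRestrict.exists_rightInverse_of_surjective f.range_rangeRestrict
  obtain ⟨h, hh⟩ := π.exists_rightInverse_of_surjective (LinearMap.range_eq_top.mpr hπsurj)
  set p := (LinearMap.range f).linearProjOfIsCompl W1 hcompl with hp
  set s : ({i // i ∈ A} → F) →ₗ[F] (Fin n → F) :=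
    C.subtype.comp (g.comp p) + h.comp (LinearMap.id - (LinearMap.range f).subtype.comp p)
    with hs
  have hsec : ∀ w, π (s w) = w := by
    intro w
    have h1 : π ((g (p w) : Fin n → F)) = ((p w : {i // i ∈ A} → F)) := by
      have : f.rangeRestrict (g (p w)) = p w := by
        rw [← LinearMap.comp_apply, hg]; rfl
      calc π ((g (p w) : Fin n → F)) = f (g (p w)) := rfl
        _ = ((f.rangeRestrict (g (p w)) : {i // i ∈ A} → F)) := rfl
        _ = ((p w : {i // i ∈ A} → F)) := by rw [this]
    have h2 : π (h (w - (p w : {i // i ∈ A} → F))) = w - (p w : {i // i ∈ A} → F) := by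
      have := congrArg (fun φ => φ (w - (p w : {i // i ∈ A} → F))) hh
      simpa using this
    simp only [hs, LinearMap.add_apply, LinearMap.comp_apply, LinearMap.sub_apply,
      LinearMap.id_apply, map_add, Submodule.subtype_apply]
    rw [h1, h2]; abel
  refine ⟨s, ?_, ?_⟩
  · intro w k
    have := congrFun (hsec w) k
    simpa [hπdef, LinearMap.funLeft_apply] using this
  · intro c hc
    have hmem : (fun k : {i // i ∈ A} => c (k : Fin n)) = f ⟨c, hc⟩ := rfl
    have hpc : p (f ⟨c, hc⟩) = ⟨f ⟨c, hc⟩, LinearMap.mem_range_self f ⟨c, hc⟩⟩ := by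
      exact Submodule.linearProjOfIsCompl_apply_left hcompl ⟨f ⟨c, hc⟩, LinearMap.mem_range_self f ⟨c, hc⟩⟩
    rw [hmem]
    simp only [hs, LinearMap.add_apply, LinearMap.comp_apply, LinearMap.sub_apply,
      LinearMap.id_apply, Submodule.subtype_apply]
    rw [hpc]
    have : f ⟨c, hc⟩ - ((⟨f ⟨c, hc⟩, LinearMap.mem_range_self f ⟨c, hc⟩⟩ :
        LinearMap.range f) : {i // i ∈ A} → F) = 0 := by simp
    rw [this, map_zero, add_zero]
    exact (g _).2

/-- for `x ∈ C1 ⊞ C2` and `A1, A2 ⊆ [n]` there is `x' ∈ C1 ⊞ C2` with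
`x'(A1, A2) = x(A1, A2)` and `rank(x') = rank(x(A1, A2))`. -/
theorem statement11 (F : Type) [Field F] [Fintype F] {n : ℕ}
    (C1 C2 : Submodule F (Fin n → F))
    (x : Matrix (Fin n) (Fin n) F) (hx : RTC.memBoxPlus C1 C2 x)
    (A1 A2 : Finset (Fin n)) :
    ∃ x' : Matrix (Fin n) (Fin n) F, RTC.memBoxPlus C1 C2 x' ∧
      (∀ i ∈ A1, ∀ j ∈ A2, x' i j = x i j) ∧
      x'.rank =
        (x.submatrix (fun i : {i // i ∈ A1} => (i : Fin n))
          (fun j : {j // j ∈ A2} => (j : Fin n))).rank := by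
  classical
  obtain ⟨a1, a2, hc1, hr2, hxeq⟩ := hx
  obtain ⟨s1, hs1sec, hs1mem⟩ := exists_code_section A1 C1
  obtain ⟨s2, hs2sec, hs2mem⟩ := exists_code_section A2 C2
  set U : Matrix (Fin n) {i // i ∈ A1} F :=
    fun i k => s1 (fun m => if k = m then (1:F) else 0) i with hUdef
  set V : Matrix {j // j ∈ A2} (Fin n) F :=
    fun l j => s2 (fun m => if l = m then (1:F) else 0) j with hVdef
  have hs1exp : ∀ (w : {i // i ∈ A1} → F) (i : Fin n), s1 w i = ∑ k, w k * U i k := by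
    intro w i
    conv_lhs => rw [pi_eq_sum_univ w, map_sum]
    rw [Finset.sum_apply]
    refine Finset.sum_congr rfl fun k _ => ?_
    rw [LinearMap.map_smul]; rfl
  have hs2exp : ∀ (w : {j // j ∈ A2} → F) (j : Fin n), s2 w j = ∑ l, w l * V l j := by
    intro w j
    conv_lhs => rw [pi_eq_sum_univ w, map_sum]
    rw [Finset.sum_apply]
    refine Finset.sum_congr rfl fun l _ => ?_
    rw [LinearMap.map_smul]; rfl
  have hU : ∀ (i : Fin n) (hi : i ∈ A1) (k : {i // i ∈ A1}),
      U i k = if k = ⟨i, hi⟩ then 1 else 0 := by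
    intro i hi k
    have := hs1sec (fun m => if k = m then (1:F) else 0) ⟨i, hi⟩
    simpa using this
  have hV : ∀ (j : Fin n) (hj : j ∈ A2) (l : {j // j ∈ A2}),
      V l j = if l = ⟨j, hj⟩ then 1 else 0 := by
    intro j hj l
    have := hs2sec (fun m => if l = m then (1:F) else 0) ⟨j, hj⟩
    simpa using this
  set y : Matrix {i // i ∈ A1} {j // j ∈ A2} F :=
    x.submatrix (fun i : {i // i ∈ A1} => (i : Fin n)) (fun j : {j // j ∈ A2} => (j : Fin n))
    with hydef
  set x' : Matrix (Fin n) (Fin n) F := U * y * V with hx'def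
  -- agreement
  have hagree : ∀ i ∈ A1, ∀ j ∈ A2, x' i j = x i j := by
    intro i hi j hj
    have h1 : ∀ l, (U * y) i l = y ⟨i, hi⟩ l := by
      intro l
      rw [Matrix.mul_apply]
      calc ∑ k, U i k * y k l
          = ∑ k, if k = ⟨i, hi⟩ then y k l else 0 := by
            refine Finset.sum_congr rfl fun k _ => ?_
            rw [hU i hi k]; split <;> simp
        _ = y ⟨i, hi⟩ l := by rw [Finset.sum_ite_eq' univ]; simp
    calc x' i j = ∑ l, (U * y) i l * V l j := by rw [hx'def, Matrix.mul_apply]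
      _ = ∑ l, if l = ⟨j, hj⟩ then y ⟨i, hi⟩ l else 0 := by
          refine Finset.sum_congr rfl fun l _ => ?_
          rw [h1 l, hV j hj l]; split <;> simp
      _ = y ⟨i, hi⟩ ⟨j, hj⟩ := by rw [Finset.sum_ite_eq' univ]; simp
      _ = x i j := rfl
  -- membership
  have hmem : RTC.memBoxPlus C1 C2 x' := by
    set ya1 : Matrix {i // i ∈ A1} {j // j ∈ A2} F :=
      a1.submatrix (fun i : {i // i ∈ A1} => (i : Fin n)) (fun j : {j // j ∈ A2} => (j : Fin n))
    set ya2 : Matrix {i // i ∈ A1} {j // j ∈ A2} F :=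
      a2.submatrix (fun i : {i // i ∈ A1} => (i : Fin n)) (fun j : {j // j ∈ A2} => (j : Fin n))
    refine ⟨U * ya1 * V, U * ya2 * V, ?_, ?_, ?_⟩
    · -- columns in C1
      intro j
      have key : (fun i => (U * ya1 * V) i j)
          = ∑ l : {j // j ∈ A2}, V l j • s1 (fun k => a1 (k : Fin n) (l : Fin n)) := by
        funext i
        rw [Finset.sum_apply]
        calc (U * ya1 * V) i j = ∑ l, (U * ya1) i l * V l j := Matrix.mul_apply
          _ = ∑ l, V l j * s1 (fun k => a1 (k : Fin n) (l : Fin n)) i := by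
              refine Finset.sum_congr rfl fun l _ => ?_
              rw [mul_comm]
              congr 1
              rw [Matrix.mul_apply, hs1exp]
              exact Finset.sum_congr rfl fun k _ => mul_comm _ _
          _ = ∑ l, (V l j • s1 (fun k => a1 (k : Fin n) (l : Fin n))) i := by
              refine Finset.sum_congr rfl fun l _ => ?_
              simp
      rw [key]
      exact Submodule.sum_smul_mem C1 _ fun l _ => hs1mem (fun i' => a1 i' (l : Fin n)) (hc1 l)
    · -- rows in C2
      intro i
      set c : Fin n → F := ∑ k : {i // i ∈ A1}, U i k • (fun j' => a2 (k : Fin n) j') with hcdef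
      have hcmem : c ∈ C2 :=
        Submodule.sum_smul_mem C2 _ fun k _ => hr2 (k : Fin n)
      have key : (fun j => (U * ya2 * V) i j) = s2 (fun l => c (l : Fin n)) := by
        funext j
        rw [hs2exp]
        refine Matrix.mul_apply.trans (Finset.sum_congr rfl fun l _ => ?_)
        congr 1
        rw [Matrix.mul_apply, hcdef, Finset.sum_apply]
        rfl
      rw [key]
      exact hs2mem c hcmem
    · -- sum
      have : y = ya1 + ya2 := by
        funext k l
        simp [hydef, hxeq, Matrix.submatrix_apply, ya1, ya2]
      rw [hx'def, this, Matrix.mul_add, Matrix.add_mul]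
  refine ⟨x', hmem, hagree, le_antisymm ?_ ?_⟩
  · calc (U * y * V).rank ≤ (U * y).rank := Matrix.rank_mul_le_left _ _
      _ ≤ y.rank := Matrix.rank_mul_le_right _ _
  · set R : Matrix {i // i ∈ A1} (Fin n) F := fun k i => if i = (k : Fin n) then 1 else 0
    set S : Matrix (Fin n) {j // j ∈ A2} F := fun j l => if j = (l : Fin n) then 1 else 0
    have hy : y = R * x' * S := by
      funext k l
      have h1 : ∀ j, (R * x') k j = x' (k : Fin n) j := by
        intro j
        rw [Matrix.mul_apply]
        calc ∑ i, R k i * x' i j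
            = ∑ i, if i = (k : Fin n) then x' i j else 0 := by
              refine Finset.sum_congr rfl fun i _ => ?_
              show (if i = (k : Fin n) then (1:F) else 0) * x' i j = _
              split <;> simp
          _ = x' (k : Fin n) j := by rw [Finset.sum_ite_eq' univ]; simp
      calc y k l = x (k : Fin n) (l : Fin n) := rfl
        _ = x' (k : Fin n) (l : Fin n) := (hagree _ k.2 _ l.2).symm
        _ = ∑ j, if j = (l : Fin n) then x' (k : Fin n) j else 0 := by
            rw [Finset.sum_ite_eq' univ]; simp
        _ = ∑ j, (R * x') k j * S j l := by
            refine Finset.sum_congr rfl fun j _ => ?_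
            rw [h1 j]
            show _ = x' (k : Fin n) j * (if j = (l : Fin n) then (1:F) else 0)
            split <;> simp
        _ = (R * x' * S) k l := (Matrix.mul_apply).symm
    rw [hy]
    calc (R * x' * S).rank ≤ (R * x').rank := Matrix.rank_mul_le_left _ _
      _ ≤ x'.rank := Matrix.rank_mul_le_right _ _
end
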